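/- arXiv:2211.11522 — 3 statements merged into one kernel-verified Lean document; each statement's English description precedes it below -/
import Mathlib

section
/- Let s₀ ∈ ℝ, δ, h > 0 with 2δh² ≤ π/3, and let z ∈ 𝕊¹. If there exist s₁ with |s₁ − (s₀ + π/2)| ≤ δh²/4 and s₂ with |s₂ − (s₀ − π/2 + δh²)| ≤ δh²/4 such that z·e^{is₁} > 0 and z·e^{is₂} > 0, then z·e^{is₀} ≥ cos(2δh²) ≥ 1/2. -/
open MeasureTheory Real Metric Set
open scoped RealInnerProductSpace

noncomputable abbrev E2 : Type := EuclideanSpace ℝ (Fin 2)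

/-- The unit vector `(cos s, sin s)`. -/
noncomputable def e (s : ℝ) : E2 := (WithLp.equiv 2 (Fin 2 → ℝ)).symm ![Real.cos s, Real.sin s]

theorem stmt_7 (s₀ δ h : ℝ) (hδ : 0 < δ) (hh : 0 < h) (hsmall : 2 * δ * h^2 ≤ π/3)
    (z : E2) (hz : ‖z‖ = 1)
    (s₁ s₂ : ℝ) (hs₁ : |s₁ - (s₀ + π/2)| ≤ δ * h^2 / 4)
    (hs₂ : |s₂ - (s₀ - π/2 + δ * h^2)| ≤ δ * h^2 / 4)
    (hz₁ : 0 < ⟪z, e s₁⟫) (hz₂ : 0 < ⟪z, e s₂⟫) :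
    Real.cos (2 * δ * h^2) ≤ ⟪z, e s₀⟫ ∧ (1:ℝ)/2 ≤ Real.cos (2 * δ * h^2) := by
  have hπ := Real.pi_gt_three
  set ε := δ * h ^ 2 with hεdef
  have hεpos : 0 < ε := by positivity
  have hε6 : ε ≤ π / 6 := by linarith
  -- coordinates of z
  have hx : z 0 ^ 2 + z 1 ^ 2 = 1 := by
    have h1 : ‖z‖ ^ 2 = 1 := by rw [hz]; norm_num
    rw [EuclideanSpace.norm_eq] at h1
    rw [Real.sq_sqrt (by positivity)] at h1
    simpa [Fin.sum_univ_two, Real.norm_eq_abs, sq_abs] using h1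
  -- complex angle
  set w : ℂ := Complex.mk (z 0) (z 1) with hw
  have habs : ‖w‖ = 1 := by
    rw [Complex.norm_def, Complex.normSq_mk]
    rw [show z 0 * z 0 + z 1 * z 1 = 1 by nlinarith]
    exact Real.sqrt_one
  have hw0 : w ≠ 0 := by
    intro h0
    rw [h0] at habs; simp at habs
  set t : ℝ := Complex.arg w with ht
  have hcos : Real.cos t = z 0 := by
    rw [ht, Complex.cos_arg hw0, habs]; simp [hw]
  have hsin : Real.sin t = z 1 := by
    rw [ht, Complex.sin_arg, habs]; simp [hw]
  have hinner : ∀ s, ⟪z, e s⟫ = Real.cos (t - s) := by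
    intro s
    have h1 : ⟪z, e s⟫ = z 0 * Real.cos s + z 1 * Real.sin s := by
      simp [e, PiLp.inner_apply, Fin.sum_univ_two]; ring
    rw [h1, ← hcos, ← hsin, Real.cos_sub]
  set D := t - s₀ with hD
  set θ := toIocMod Real.two_pi_pos (-π) D with hθ
  have hθmem := toIocMod_mem_Ioc Real.two_pi_pos (-π) D
  have hθlb : -π < θ := hθmem.1
  have hθub : θ ≤ π := by
    have := hθmem.2; linarith [this]
  obtain ⟨n, hn⟩ : ∃ n : ℤ, θ = D - n * (2 * π) := by
    refine ⟨toIocDiv Real.two_pi_pos (-π) D, ?_⟩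
    have := self_sub_toIocDiv_zsmul Real.two_pi_pos (-π) D
    rw [hθ, ← this]; push_cast [zsmul_eq_mul]; ring
  have hcosθ : ∀ a : ℝ, Real.cos (θ - a) = Real.cos (D - a) := by
    intro a
    have : θ - a = D - a - n * (2 * π) := by rw [hn]; ring
    rw [this, Real.cos_sub_int_mul_two_pi]
  set a₁ := s₁ - s₀ with ha₁
  set a₂ := s₂ - s₀ with ha₂
  have hc₁ : 0 < Real.cos (θ - a₁) := by
    rw [hcosθ]
    have : D - a₁ = t - s₁ := by rw [hD, ha₁]; ring
    rw [this, ← hinner]; exact hz₁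
  have hc₂ : 0 < Real.cos (θ - a₂) := by
    rw [hcosθ]
    have : D - a₂ = t - s₂ := by rw [hD, ha₂]; ring
    rw [this, ← hinner]; exact hz₂
  have hb₁ := abs_le.mp hs₁
  have hb₂ := abs_le.mp hs₂
  have ha₁l : π / 2 - ε / 4 ≤ a₁ := by rw [ha₁]; linarith [hb₁.1]
  have ha₁u : a₁ ≤ π / 2 + ε / 4 := by rw [ha₁]; linarith [hb₁.2]
  have ha₂l : -(π / 2) + 3 * ε / 4 ≤ a₂ := by rw [ha₂]; linarith [hb₂.1]
  have ha₂u : a₂ ≤ -(π / 2) + 5 * ε / 4 := by rw [ha₂]; linarith [hb₂.2]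
  -- θ - a₂ ∈ (-π/2, π/2)
  have hd₂l : -(π / 2) < θ - a₂ := by
    by_contra hcon
    push_neg at hcon
    have hnp : Real.cos (θ - a₂) ≤ 0 := by
      rw [← Real.cos_neg]
      apply Real.cos_nonpos_of_pi_div_two_le_of_le
      · linarith
      · linarith
    linarith
  have hd₂u : θ - a₂ < π / 2 := by
    by_contra hcon
    push_neg at hcon
    have hnp : Real.cos (θ - a₂) ≤ 0 := by
      apply Real.cos_nonpos_of_pi_div_two_le_of_le hcon
      linarith
    linarith
  -- θ - a₁ ∈ (-π/2, π/2)
  have hd₁l : -(π / 2) < θ - a₁ := by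
    by_contra hcon
    push_neg at hcon
    have hnp : Real.cos (θ - a₁) ≤ 0 := by
      rw [← Real.cos_neg]
      apply Real.cos_nonpos_of_pi_div_two_le_of_le
      · linarith
      · linarith
    linarith
  have hd₁u : θ - a₁ < π / 2 := by
    by_contra hcon
    push_neg at hcon
    have hnp : Real.cos (θ - a₁) ≤ 0 := by
      apply Real.cos_nonpos_of_pi_div_two_le_of_le hcon
      linarith
    linarith
  have hθabs : |θ| ≤ 2 * ε := by
    rw [abs_le]
    constructor <;> [linarith; linarith]
  have key : Real.cos (2 * ε) ≤ ⟪z, e s₀⟫ := by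
    have h0 : ⟪z, e s₀⟫ = Real.cos θ := by
      rw [hinner]
      have : Real.cos θ = Real.cos (θ - 0) := by ring_nf
      rw [this, hcosθ]
      norm_num [hD]
    rw [h0, ← Real.cos_abs θ]
    exact Real.cos_le_cos_of_nonneg_of_le_pi (abs_nonneg θ) (by linarith) hθabs
  have kk : (1:ℝ)/2 ≤ Real.cos (2 * ε) := by
    rw [show (1:ℝ)/2 = Real.cos (π/3) by rw [Real.cos_pi_div_three]]
    exact Real.cos_le_cos_of_nonneg_of_le_pi (by positivity) (by linarith) (by linarith)
  constructor
  · rw [show 2 * δ * h ^ 2 = 2 * ε by rw [hεdef]; ring]; exact key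
  · rw [show 2 * δ * h ^ 2 = 2 * ε by rw [hεdef]; ring]; exact kk
end

section
/- Let m ∈ L¹_loc(Ω; ℝ²) with |m| = 1 a.e., and let x₀ ∈ Ω be a VMO point of m, i.e. ⨍_{B_r(x₀)} |m − ⨍_{B_r(x₀)} m| dx → 0 as r → 0⁺. Suppose additionally that for some b > 0, max_{x₁,x₂ ∈ B̄_{2r}(x₀)} |⨍_{B_r(x₁)} m − ⨍_{B_r(x₂)} m| = O(r^b) as r → 0⁺. Then x₀ is a Lebesgue point of m: there exists z ∈ ℝ² with ⨍_{B_r(x₀)} |m − z| dx → 0. -/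
set_option maxHeartbeats 1000000

open MeasureTheory Real Metric Set Filter
open scoped RealInnerProductSpace

lemma trans_int (f : E2 → E2) (c : E2) (t : ℝ) :
    ∫ y in ball c t, f y = ∫ z in ball (0:E2) t, f (c + z) := by
  have hemb : MeasurableEmbedding (fun z : E2 => c + z) :=
    (MeasurableEquiv.addLeft c).measurableEmbedding
  have hmp := (measurePreserving_add_left (volume : Measure E2) c).restrict_image_emb hemb
    (ball (0:E2) t)
  have himg : (fun z : E2 => c + z) '' ball (0:E2) t = ball c t := by
    ext y; simp [Metric.mem_ball, dist_eq_norm]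
  rw [himg] at hmp
  rw [← hmp.map_eq, hemb.integral_map]

lemma integ_shear (m : E2 → E2) (x₀ : E2) (hm : IntegrableOn m (ball x₀ (1/2)) volume)
    {r s : ℝ} (hr : 0 < r) (hs : 0 < s) (hrs : s + r ≤ 1/2) :
    Integrable (fun p : E2 × E2 => m (p.1 + p.2))
      (((volume : Measure E2).restrict (ball x₀ s)).prod
       ((volume : Measure E2).restrict (ball (0:E2) r))) := by
  rw [Measure.prod_restrict]
  have hT : MeasurePreserving (fun p : E2 × E2 => (p.1 + p.2, p.2))
      ((volume : Measure E2).prod volume) (volume.prod volume) :=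
    measurePreserving_add_prod _ _
  set S' : Set (E2 × E2) := {q : E2 × E2 | q.1 - q.2 ∈ ball x₀ s ∧ q.2 ∈ ball (0:E2) r} with hS'def
  have hS' : MeasurableSet S' := by
    apply MeasurableSet.inter
    · exact (measurable_fst.sub measurable_snd) measurableSet_ball
    · exact measurable_snd measurableSet_ball
  have hpre : (fun p : E2 × E2 => (p.1 + p.2, p.2)) ⁻¹' S' = ball x₀ s ×ˢ ball (0:E2) r := by
    ext p; simp [hS'def, Set.mem_prod]
  have hmp := hT.restrict_preimage hS'
  rw [hpre] at hmp
  have hembT : MeasurableEmbedding (fun p : E2 × E2 => (p.1 + p.2, p.2)) := by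
    let e : (E2 × E2) ≃ᵐ (E2 × E2) :=
    { toFun := fun p => (p.1 + p.2, p.2)
      invFun := fun p => (p.1 - p.2, p.2)
      left_inv := fun p => by simp
      right_inv := fun p => by simp
      measurable_toFun := (measurable_fst.add measurable_snd).prodMk measurable_snd
      measurable_invFun := (measurable_fst.sub measurable_snd).prodMk measurable_snd }
    exact e.measurableEmbedding
  have hint : Integrable (fun q : E2 × E2 => m q.1)
      (((volume : Measure E2).prod volume).restrict S') := by
    have hsub : S' ⊆ (ball x₀ (1/2)) ×ˢ (ball (0:E2) r) := by
      rintro ⟨a, c⟩ ⟨h1, h2⟩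
      refine ⟨?_, h2⟩
      simp only [Metric.mem_ball, dist_eq_norm] at *
      calc ‖a - x₀‖ = ‖(a - c - x₀) + c‖ := by congr 1; abel
        _ ≤ ‖a - c - x₀‖ + ‖c‖ := norm_add_le _ _
        _ < s + r := by simpa [sub_zero] using add_lt_add h1 h2
        _ ≤ 1/2 := hrs
    have hmono : ((volume : Measure E2).prod volume).restrict S' ≤
        ((volume : Measure E2).prod volume).restrict ((ball x₀ (1/2)) ×ˢ (ball (0:E2) r)) :=
      Measure.restrict_mono hsub le_rfl
    refine Integrable.mono_measure ?_ hmono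
    rw [← Measure.prod_restrict]
    haveI : IsFiniteMeasure ((volume : Measure E2).restrict (ball (0:E2) r)) :=
      ⟨by rw [Measure.restrict_apply_univ]; exact measure_ball_lt_top⟩
    have hmap : (((volume : Measure E2).restrict (ball x₀ (1/2))).prod
        ((volume : Measure E2).restrict (ball (0:E2) r))).map Prod.fst
        = ((volume : Measure E2).restrict (ball (0:E2) r) Set.univ) •
          ((volume : Measure E2).restrict (ball x₀ (1/2))) := Measure.map_fst_prod
    have haesm : AEStronglyMeasurable m
        ((((volume : Measure E2).restrict (ball x₀ (1/2))).prod
          ((volume : Measure E2).restrict (ball (0:E2) r))).map Prod.fst) := by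
      rw [hmap]
      exact hm.aestronglyMeasurable.smul_measure _
    have := (integrable_map_measure haesm measurable_fst.aemeasurable).mp ?_
    · exact this
    · rw [hmap]
      exact hm.smul_measure (by rw [Measure.restrict_apply_univ]; exact measure_ball_lt_top.ne)
  exact (hmp.integrable_comp_emb hembT).mpr hint

lemma fubini_int (m : E2 → E2) (x₀ : E2) (hm : IntegrableOn m (ball x₀ (1/2)) volume)
    {r s : ℝ} (hr : 0 < r) (hs : 0 < s) (hrs : s + r ≤ 1/2) :
    ∫ x in ball x₀ s, (∫ y in ball x r, m y) = ∫ x in ball x₀ r, (∫ y in ball x s, m y) := by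
  have h1 : ∫ x in ball x₀ s, (∫ y in ball x r, m y)
      = ∫ x in ball x₀ s, ∫ z in ball (0:E2) r, m (x + z) := by
    refine setIntegral_congr_fun measurableSet_ball fun x _ => ?_
    exact trans_int m x r
  have h2 : ∫ x in ball x₀ s, ∫ z in ball (0:E2) r, m (x + z)
      = ∫ z in ball (0:E2) r, ∫ x in ball x₀ s, m (x + z) :=
    integral_integral_swap (integ_shear m x₀ hm hr hs hrs)
  have h3 : ∫ z in ball (0:E2) r, ∫ x in ball x₀ s, m (x + z)
      = ∫ z in ball (0:E2) r, ∫ y in ball (x₀ + z) s, m y := by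
    refine setIntegral_congr_fun measurableSet_ball fun z _ => ?_
    rw [trans_int m (x₀ + z) s, trans_int (fun x => m (x + z)) x₀ s]
    refine setIntegral_congr_fun measurableSet_ball fun w _ => ?_
    congr 1; abel
  have h4 : ∫ x in ball x₀ r, (∫ y in ball x s, m y)
      = ∫ z in ball (0:E2) r, ∫ y in ball (x₀ + z) s, m y :=
    trans_int (fun x => ∫ y in ball x s, m y) x₀ r
  rw [h1, h2, h3, ← h4]

lemma avg_fub (m : E2 → E2) (x₀ : E2) (hm : IntegrableOn m (ball x₀ (1/2)) volume)
    {r s : ℝ} (hr : 0 < r) (hs : 0 < s) (hrs : s + r ≤ 1/2) :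
    ⨍ x in ball x₀ s, (⨍ y in ball x r, m y) = ⨍ x in ball x₀ r, (⨍ y in ball x s, m y) := by
  have key : ∀ {a c : ℝ}, 0 < a →
      (⨍ x in ball x₀ c, (⨍ y in ball x a, m y)) = ((volume (ball x₀ c)).toReal⁻¹ *
        (volume (ball (0:E2) a)).toReal⁻¹) • ∫ x in ball x₀ c, (∫ y in ball x a, m y) := by
    intro a c ha
    have h : ∀ x : E2, (⨍ y in ball x a, m y)
        = (volume (ball (0:E2) a)).toReal⁻¹ • ∫ y in ball x a, m y := fun x => by
      rw [setAverage_eq, measureReal_def, Measure.addHaar_ball_center volume x]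
    simp_rw [h]
    rw [setAverage_eq, integral_smul, smul_smul, measureReal_def]
  rw [key hr, key hs, fubini_int m x₀ hm hr hs hrs,
    Measure.addHaar_ball_center volume x₀ s, Measure.addHaar_ball_center volume x₀ r, mul_comm]

lemma integ_avg (m : E2 → E2) (x₀ : E2) (hm : IntegrableOn m (ball x₀ (1/2)) volume)
    {r s : ℝ} (hr : 0 < r) (hs : 0 < s) (hrs : s + r ≤ 1/2) :
    IntegrableOn (fun x => ⨍ y in ball x r, m y) (ball x₀ s) volume := by
  have h := (integ_shear m x₀ hm hr hs hrs).integral_prod_left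
  have heq : (fun x : E2 => ⨍ y in ball x r, m y)
      = fun x : E2 => (volume (ball (0:E2) r)).toReal⁻¹ •
        ∫ z in ball (0:E2) r, m (x + z) := by
    funext x
    rw [setAverage_eq, measureReal_def, Measure.addHaar_ball_center volume x, trans_int]
  rw [IntegrableOn, heq]
  exact h.smul ((volume (ball (0:E2) r)).toReal⁻¹)

lemma avg_osc (m : E2 → E2) (x₀ : E2) (b C : ℝ) (hC : 0 ≤ C)
    (hosc : ∀ r ∈ Ioo (0:ℝ) (1/2), ∀ x₁ ∈ closedBall x₀ (2*r), ∀ x₂ ∈ closedBall x₀ (2*r),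
      ‖(⨍ x in ball x₁ r, m x) - ⨍ x in ball x₂ r, m x‖ ≤ C * r ^ b)
    (hm : IntegrableOn m (ball x₀ (1/2)) volume)
    {r s : ℝ} (hr : 0 < r) (hs : 0 < s) (hr2 : r < 1/2) (hsr : s ≤ 2*r) (hrs : s + r ≤ 1/2) :
    ‖(⨍ y in ball x₀ r, m y) - ⨍ x in ball x₀ s, (⨍ y in ball x r, m y)‖ ≤ C * r ^ b := by
  set c := ⨍ y in ball x₀ r, m y with hc
  set G : E2 → E2 := fun x => ⨍ y in ball x r, m y with hGdef
  have hG : IntegrableOn G (ball x₀ s) volume := integ_avg m x₀ hm hr hs hrs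
  have hvol : (0:ℝ) < (volume (ball x₀ s)).toReal :=
    ENNReal.toReal_pos (measure_ball_pos _ _ hs).ne' measure_ball_lt_top.ne
  have key : c - ⨍ x in ball x₀ s, G x = ⨍ x in ball x₀ s, (c - G x) := by
    rw [setAverage_eq, setAverage_eq,
      integral_sub (integrableOn_const (C := c) measure_ball_lt_top.ne) hG, smul_sub,
      setIntegral_const, smul_smul, measureReal_def, inv_mul_cancel₀ hvol.ne', one_smul]
  rw [key, setAverage_eq, measureReal_def, norm_smul, Real.norm_eq_abs,
    abs_of_nonneg (inv_nonneg.2 ENNReal.toReal_nonneg)]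
  have hb2 : ‖∫ x in ball x₀ s, (c - G x)‖ ≤ (C * r ^ b) * (volume (ball x₀ s)).toReal := by
    apply norm_setIntegral_le_of_norm_le_const_ae' measure_ball_lt_top
    apply Eventually.of_forall
    intro x hx
    have hx' : x ∈ closedBall x₀ (2*r) :=
      closedBall_subset_closedBall hsr (ball_subset_closedBall hx)
    exact hosc r ⟨hr, hr2⟩ x₀ (mem_closedBall_self (by positivity)) x hx'
  calc (volume (ball x₀ s)).toReal⁻¹ * ‖∫ x in ball x₀ s, (c - G x)‖
      ≤ (volume (ball x₀ s)).toReal⁻¹ * ((C * r ^ b) * (volume (ball x₀ s)).toReal) :=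
        mul_le_mul_of_nonneg_left hb2 (inv_nonneg.2 ENNReal.toReal_nonneg)
    _ = C * r ^ b := by
        rw [mul_comm (C * r ^ b) _, ← mul_assoc, inv_mul_cancel₀ hvol.ne', one_mul]

lemma osc2 (m : E2 → E2) (x₀ : E2) (b C : ℝ) (hC : 0 ≤ C)
    (hosc : ∀ r ∈ Ioo (0:ℝ) (1/2), ∀ x₁ ∈ closedBall x₀ (2*r), ∀ x₂ ∈ closedBall x₀ (2*r),
      ‖(⨍ x in ball x₁ r, m x) - ⨍ x in ball x₂ r, m x‖ ≤ C * r ^ b)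
    (hm : IntegrableOn m (ball x₀ (1/2)) volume)
    {r s : ℝ} (hr : 0 < r) (hs : 0 < s) (hr2 : r < 1/8) (hs2 : s < 1/8)
    (hsr : s ≤ 2*r) (hrs : r ≤ 2*s) :
    ‖(⨍ y in ball x₀ r, m y) - ⨍ y in ball x₀ s, m y‖ ≤ C * r ^ b + C * s ^ b := by
  have h1 : s + r ≤ 1/2 := by linarith
  have h2 : r + s ≤ 1/2 := by linarith
  have hA := avg_osc m x₀ b C hC hosc hm hr hs (by linarith) hsr h1
  have hB := avg_osc m x₀ b C hC hosc hm hs hr (by linarith) hrs h2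
  have hAB := avg_fub m x₀ hm hr hs h1
  calc ‖(⨍ y in ball x₀ r, m y) - ⨍ y in ball x₀ s, m y‖
      ≤ ‖(⨍ y in ball x₀ r, m y) - ⨍ x in ball x₀ s, (⨍ y in ball x r, m y)‖ +
        ‖(⨍ x in ball x₀ r, (⨍ y in ball x s, m y)) - ⨍ y in ball x₀ s, m y‖ := by
        rw [← hAB]
        exact norm_sub_le_norm_sub_add_norm_sub _ _ _
    _ ≤ C * r ^ b + C * s ^ b := by
        refine add_le_add hA ?_
        rw [norm_sub_rev]
        exact hB

lemma psi_conv (m : E2 → E2) (x₀ : E2) (b C : ℝ) (hb : 0 < b) (hC : 0 ≤ C)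
    (hosc : ∀ r ∈ Ioo (0:ℝ) (1/2), ∀ x₁ ∈ closedBall x₀ (2*r), ∀ x₂ ∈ closedBall x₀ (2*r),
      ‖(⨍ x in ball x₁ r, m x) - ⨍ x in ball x₂ r, m x‖ ≤ C * r ^ b)
    (hm : IntegrableOn m (ball x₀ (1/2)) volume) :
    ∃ z : E2, Tendsto (fun r : ℝ => ⨍ y in ball x₀ r, m y) (nhdsWithin 0 (Ioi 0)) (nhds z) := by
  set ψ : ℝ → E2 := fun r => ⨍ y in ball x₀ r, m y with hψ
  set ρ : ℕ → ℝ := fun n => (1/16) * (1/2)^n with hρ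
  have hρpos : ∀ n, 0 < ρ n := fun n => by positivity
  have hρlt : ∀ n, ρ n < 1/8 := fun n => by
    have : (1/2:ℝ)^n ≤ 1 := pow_le_one₀ (by norm_num) (by norm_num)
    simp only [hρ]; nlinarith
  have hρsucc : ∀ n, ρ (n+1) = ρ n / 2 := fun n => by
    simp only [hρ, pow_succ]; ring
  set q : ℝ := (1/2:ℝ) ^ b with hq
  have hq0 : 0 < q := Real.rpow_pos_of_pos (by norm_num) b
  have hq1 : q < 1 := Real.rpow_lt_one (by norm_num) (by norm_num) hb
  have hpow : ∀ n : ℕ, ((1/2:ℝ)^n) ^ b = q ^ n := fun n => by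
    rw [← Real.rpow_natCast (1/2:ℝ) n, ← Real.rpow_mul (by norm_num), mul_comm,
      Real.rpow_mul (by norm_num), Real.rpow_natCast]
  have hρb : ∀ n : ℕ, (ρ n) ^ b = (1/16:ℝ)^b * q ^ n := fun n => by
    rw [hρ, Real.mul_rpow (by norm_num) (by positivity), hpow]
  set C₀ : ℝ := 2 * C * (1/16:ℝ)^b with hC₀
  have hC₀0 : 0 ≤ C₀ := by positivity
  set u : ℕ → E2 := fun n => ψ (ρ n) with hu
  have hdist : ∀ n, dist (u n) (u (n+1)) ≤ C₀ * q ^ n := by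
    intro n
    rw [dist_eq_norm]
    have h1 := osc2 m x₀ b C hC hosc hm (hρpos n) (hρpos (n+1)) (hρlt n)
      (lt_trans (by rw [hρsucc]; linarith [hρpos n]) (hρlt n))
      (by rw [hρsucc]; linarith [hρpos n]) (by rw [hρsucc]; linarith [hρpos n])
    have h2 : (ρ (n+1)) ^ b ≤ (ρ n) ^ b :=
      Real.rpow_le_rpow (hρpos (n+1)).le (by rw [hρsucc]; linarith [hρpos n]) hb.le
    calc ‖u n - u (n+1)‖ ≤ C * (ρ n) ^ b + C * (ρ (n+1)) ^ b := h1
      _ ≤ 2 * C * (ρ n) ^ b := by nlinarith [Real.rpow_nonneg (hρpos (n+1)).le b]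
      _ = C₀ * q ^ n := by rw [hρb]; ring
  have hcauchy : CauchySeq u := cauchySeq_of_le_geometric q C₀ hq1 hdist
  obtain ⟨z, hz⟩ := cauchySeq_tendsto_of_complete hcauchy
  have htail : ∀ n, dist (u n) z ≤ C₀ * q ^ n / (1 - q) :=
    dist_le_of_le_geometric_of_tendsto q C₀ hq1 hdist hz
  refine ⟨z, ?_⟩
  set K : ℝ := C + C * (2:ℝ)^b + (C₀ / (1 - q)) * (32:ℝ)^b with hK
  have hbound : ∀ r : ℝ, 0 < r → r ≤ 1/16 → dist (ψ r) z ≤ K * r ^ b := by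
    intro r hr hr16
    -- find n with ρ (n+1) < r ≤ ρ n
    have hP : ∃ k : ℕ, (1/2:ℝ) ^ k < 16 * r := exists_pow_lt_of_lt_one (by linarith) (by norm_num)
    classical
    have hM1 : (1/2:ℝ) ^ (Nat.find hP) < 16 * r := Nat.find_spec hP
    have hM0 : Nat.find hP ≠ 0 := by
      intro h0
      rw [h0] at hM1
      simp at hM1
      linarith
    obtain ⟨n, hMn⟩ : ∃ n, Nat.find hP = n + 1 := Nat.exists_eq_succ_of_ne_zero hM0
    rw [hMn] at hM1
    have hnlt : ¬ ((1/2:ℝ) ^ n < 16 * r) := Nat.find_min hP (by omega)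
    push_neg at hnlt
    have hrρn : r ≤ ρ n := by rw [hρ]; nlinarith
    have hρn2r : ρ n < 2 * r := by rw [hρ]; rw [pow_succ] at hM1; nlinarith
    have h1 := osc2 m x₀ b C hC hosc hm hr (hρpos n) (by linarith [hρlt n]) (hρlt n)
      (by linarith) (by linarith [hρpos n])
    have h2 : (ρ n) ^ b ≤ (2:ℝ)^b * r ^ b := by
      rw [← Real.mul_rpow (by norm_num) hr.le]
      exact Real.rpow_le_rpow (hρpos n).le (by linarith) hb.le
    have h3 : q ^ n ≤ (32:ℝ)^b * r ^ b := by
      rw [← hpow, ← Real.mul_rpow (by norm_num) hr.le]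
      refine Real.rpow_le_rpow (by positivity) ?_ hb.le
      have : (1/2:ℝ)^n = 16 * ρ n := by rw [hρ]; ring
      rw [this]; linarith
    have h4 : dist (u n) z ≤ (C₀ / (1 - q)) * ((32:ℝ)^b * r ^ b) := by
      refine le_trans (htail n) ?_
      have heq : C₀ * q ^ n / (1 - q) = (C₀ / (1 - q)) * q ^ n := by ring
      rw [heq]
      have h1q : (0:ℝ) < 1 - q := by linarith
      exact mul_le_mul_of_nonneg_left h3 (by positivity)
    calc dist (ψ r) z ≤ dist (ψ r) (u n) + dist (u n) z := dist_triangle _ _ _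
      _ ≤ (C * r ^ b + C * (ρ n) ^ b) + (C₀ / (1 - q)) * ((32:ℝ)^b * r ^ b) := by
          refine add_le_add ?_ h4
          rw [dist_eq_norm]
          exact h1
      _ ≤ K * r ^ b := by
          have h5 : C * (ρ n) ^ b ≤ C * ((2:ℝ)^b * r ^ b) :=
            mul_le_mul_of_nonneg_left h2 hC
          rw [hK]; nlinarith
  rw [tendsto_iff_dist_tendsto_zero]
  have hK0 : 0 ≤ K := by
    have : (0:ℝ) < 1 - q := by linarith
    rw [hK]; positivity
  have h0 : Tendsto (fun r : ℝ => r ^ b) (nhdsWithin 0 (Ioi 0)) (nhds 0) := by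
    have h := (Real.continuousAt_rpow_const 0 b (Or.inr hb.le)).continuousWithinAt
      (s := Ioi (0:ℝ))
    rw [ContinuousWithinAt, Real.zero_rpow hb.ne'] at h
    exact h
  have hup : Tendsto (fun r : ℝ => K * r ^ b) (nhdsWithin 0 (Ioi 0)) (nhds 0) := by
    have := h0.const_mul K
    simpa using this
  refine tendsto_of_tendsto_of_tendsto_of_le_of_le' tendsto_const_nhds hup
    (Eventually.of_forall fun r => dist_nonneg) ?_
  filter_upwards [Ioo_mem_nhdsGT_of_mem (by norm_num : (0:ℝ) ∈ Ico (0:ℝ) (1/16))]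
    with r hr
  exact hbound r hr.1 hr.2.le

theorem stmt_15 (Ω : Set E2) (hΩ : IsOpen Ω)
    (m : E2 → E2) (hloc : LocallyIntegrableOn m Ω)
    (hunit : ∀ᵐ x ∂(volume.restrict Ω), ‖m x‖ = 1)
    (x₀ : E2) (hx₀ : ball x₀ 1 ⊆ Ω)
    (hVMO : Tendsto (fun r : ℝ => ⨍ x in ball x₀ r, ‖m x - ⨍ y in ball x₀ r, m y‖)
      (nhdsWithin 0 (Ioi 0)) (nhds 0))
    (b C : ℝ) (hb : 0 < b) (hC : 0 ≤ C)
    (hosc : ∀ r ∈ Ioo (0:ℝ) (1/2), ∀ x₁ ∈ closedBall x₀ (2*r), ∀ x₂ ∈ closedBall x₀ (2*r),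
      ‖(⨍ x in ball x₁ r, m x) - ⨍ x in ball x₂ r, m x‖ ≤ C * r ^ b) :
    ∃ z : E2, Tendsto (fun r : ℝ => ⨍ x in ball x₀ r, ‖m x - z‖)
      (nhdsWithin 0 (Ioi 0)) (nhds 0) := by
  have hmI : IntegrableOn m (ball x₀ (1/2)) volume := by
    have hcb : closedBall x₀ (1/2) ⊆ Ω :=
      subset_trans (closedBall_subset_ball (by norm_num)) hx₀
    exact (hloc.integrableOn_compact_subset hcb (isCompact_closedBall x₀ (1/2))).mono_set
      ball_subset_closedBall
  obtain ⟨z, hz⟩ := psi_conv m x₀ b C hb hC hosc hmI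
  refine ⟨z, ?_⟩
  have h2 : Tendsto (fun r : ℝ => ‖(⨍ y in ball x₀ r, m y) - z‖)
      (nhdsWithin 0 (Ioi 0)) (nhds 0) := by
    rw [tendsto_iff_dist_tendsto_zero] at hz
    simpa [dist_eq_norm] using hz
  have hupper : Tendsto (fun r : ℝ => (⨍ x in ball x₀ r, ‖m x - ⨍ y in ball x₀ r, m y‖)
      + ‖(⨍ y in ball x₀ r, m y) - z‖) (nhdsWithin 0 (Ioi 0)) (nhds 0) := by
    simpa using hVMO.add h2
  refine tendsto_of_tendsto_of_tendsto_of_le_of_le' tendsto_const_nhds hupper ?_ ?_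
  · refine Eventually.of_forall fun r => ?_
    rw [setAverage_eq]
    exact smul_nonneg (inv_nonneg.2 ENNReal.toReal_nonneg)
      (integral_nonneg fun x => norm_nonneg _)
  · filter_upwards [Ioo_mem_nhdsGT_of_mem (by norm_num : (0:ℝ) ∈ Ico (0:ℝ) (1/2))]
      with r hr
    set w : E2 := ⨍ y in ball x₀ r, m y with hw
    have hball : IntegrableOn m (ball x₀ r) volume :=
      hmI.mono_set (ball_subset_ball (le_of_lt hr.2))
    have hconst : ∀ c : E2, IntegrableOn (fun _ : E2 => c) (ball x₀ r) volume := fun c =>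
      integrableOn_const measure_ball_lt_top.ne
    have hi1 : IntegrableOn (fun x => ‖m x - z‖) (ball x₀ r) volume :=
      (hball.sub (hconst z)).norm
    have hi2a : IntegrableOn (fun x => ‖m x - w‖) (ball x₀ r) volume :=
      (hball.sub (hconst w)).norm
    have hi2 : IntegrableOn (fun x => ‖m x - w‖ + ‖w - z‖) (ball x₀ r) volume :=
      hi2a.add (integrableOn_const measure_ball_lt_top.ne)
    have hvol : (0:ℝ) < (volume (ball x₀ r)).toReal :=
      ENNReal.toReal_pos (measure_ball_pos _ _ hr.1).ne' measure_ball_lt_top.ne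
    have hmono : ∫ x in ball x₀ r, ‖m x - z‖ ≤ ∫ x in ball x₀ r, (‖m x - w‖ + ‖w - z‖) :=
      integral_mono hi1 hi2 fun x => norm_sub_le_norm_sub_add_norm_sub _ _ _
    calc ⨍ x in ball x₀ r, ‖m x - z‖
        = (volume (ball x₀ r)).toReal⁻¹ • ∫ x in ball x₀ r, ‖m x - z‖ := setAverage_eq _ _ _
      _ ≤ (volume (ball x₀ r)).toReal⁻¹ • ∫ x in ball x₀ r, (‖m x - w‖ + ‖w - z‖) :=
          smul_le_smul_of_nonneg_left hmono (inv_nonneg.2 ENNReal.toReal_nonneg)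
      _ = (⨍ x in ball x₀ r, ‖m x - w‖) + ‖w - z‖ := by
          rw [integral_add hi2a (integrableOn_const measure_ball_lt_top.ne),
            setIntegral_const, setAverage_eq, measureReal_def, smul_add, smul_smul, smul_eq_mul, smul_eq_mul,
            inv_mul_cancel₀ hvol.ne', one_mul]
end

section
/- Let σ be a finite signed Borel measure on Ω × ℝ/2πℤ and let χ(x,s) = 𝟙_E(x,s) for a measurable set E ⊂ Ω × ℝ/2πℤ solve the kinetic equation e^{is}·∇_x χ = ∂_s σ in the sense of distributions. Define χ^FT(τ, x, s) = χ(x − τ e^{is}, s). Then for any ψ ∈ C¹_c((−T,T) × Ω × ℝ/2πℤ) satisfying the transport relation ∂_τ ψ + e^{is}·∇_x ψ = 0, one has (d/dτ) ∫ ψ(τ,·)(χ^FT(τ,·) − χ) dx ds = ∫ ∂_s ψ(τ,·) dσ in the sense of distributions in τ, on the set where supports stay in Ω. -/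
open MeasureTheory Real Metric Set
open scoped RealInnerProductSpace

lemma cont_e : Continuous e := by
  have h : Continuous fun s : ℝ => ![Real.cos s, Real.sin s] := by
    apply continuous_pi
    intro i
    fin_cases i <;> simp [Real.continuous_cos, Real.continuous_sin]
  exact (PiLp.continuous_toLp (p := 2) (β := fun _ : Fin 2 => ℝ)).comp h

lemma shear_mp (τ : ℝ) :
    MeasurePreserving (fun p : E2 × ℝ => (p.1 + τ • e p.2, p.2))
      (volume : Measure (E2 × ℝ)) volume := by
  rw [Measure.volume_eq_prod]
  have hmid : MeasurePreserving (fun q : ℝ × E2 => (q.1, q.2 + τ • e q.1))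
      ((volume : Measure ℝ).prod volume) ((volume : Measure ℝ).prod volume) :=
    MeasurePreserving.skew_product (g := fun s y => y + τ • e s)
      (MeasurePreserving.id _)
      ((continuous_snd.add ((cont_e.comp continuous_fst).const_smul τ)).measurable)
      (Filter.Eventually.of_forall fun s =>
        (measurePreserving_add_right (volume : Measure E2) (τ • e s)).map_eq)
  exact (Measure.measurePreserving_swap.comp hmid).comp
    (Measure.measurePreserving_swap (μ := (volume : Measure E2)) (ν := (volume : Measure ℝ)))

/-- The shear as a measurable equivalence. -/
noncomputable def shearEquiv (τ : ℝ) : (E2 × ℝ) ≃ᵐ (E2 × ℝ) where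
  toFun := fun p => (p.1 + τ • e p.2, p.2)
  invFun := fun p => (p.1 - τ • e p.2, p.2)
  left_inv := fun p => by simp
  right_inv := fun p => by simp
  measurable_toFun :=
    ((continuous_fst.add ((cont_e.comp continuous_snd).const_smul τ)).prodMk
      continuous_snd).measurable
  measurable_invFun :=
    ((continuous_fst.sub ((cont_e.comp continuous_snd).const_smul τ)).prodMk
      continuous_snd).measurable

lemma bdd_mul_integrable {α : Type*} [MeasurableSpace α] {μ : Measure α} {F b : α → ℝ}
    (hF : Integrable F μ) (hb : Measurable b) (hbb : ∀ x, ‖b x‖ ≤ 1) :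
    Integrable (fun x => b x * F x) μ :=
  hF.bdd_mul hb.aestronglyMeasurable (Filter.Eventually.of_forall hbb)

theorem stmt_17 (Ω : Set E2) (hΩ : IsOpen Ω)
    (E : Set (E2 × ℝ)) (hE : MeasurableSet E)
    -- the finite signed measure σ, given through its Jordan decomposition σ = σp - σn
    (σp σn : Measure (E2 × ℝ)) [IsFiniteMeasure σp] [IsFiniteMeasure σn]
    (χ : E2 × ℝ → ℝ) (hχ : χ = Set.indicator E 1)
    -- kinetic equation e^{is}·∇ₓχ = ∂ₛσ in the sense of distributions on Ω × ℝ
    (hkin : ∀ g : E2 × ℝ → ℝ, ContDiff ℝ 1 g → HasCompactSupport g →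
      tsupport g ⊆ Ω ×ˢ (univ : Set ℝ) →
      ∫ p : E2 × ℝ, χ p * fderiv ℝ g p (e p.2, 0) =
        (∫ p : E2 × ℝ, fderiv ℝ g p (0, 1) ∂σp) -
          ∫ p : E2 × ℝ, fderiv ℝ g p (0, 1) ∂σn)
    (T : ℝ) (hT : 0 < T)
    (ψ : ℝ × E2 × ℝ → ℝ) (hψ : ContDiff ℝ 1 ψ) (hψc : HasCompactSupport ψ)
    (hψsupp : tsupport ψ ⊆ Ioo (-T) T ×ˢ Ω ×ˢ (univ : Set ℝ))
    -- transport relation ∂_τψ + e^{is}·∇ₓψ = 0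
    (htrans : ∀ τ : ℝ, ∀ x : E2, ∀ s : ℝ, fderiv ℝ ψ (τ, x, s) (1, e s, 0) = 0)
    -- supports stay in Ω under the free transport
    (hdom : ∀ p ∈ tsupport ψ, ∀ τ : ℝ, |τ| ≤ T → p.2.1 - τ • e p.2.2 ∈ Ω) :
    ∀ φ : ℝ → ℝ, ContDiff ℝ 1 φ → HasCompactSupport φ → tsupport φ ⊆ Ioo (-T) T →
      -∫ τ : ℝ, deriv φ τ *
          ∫ p : E2 × ℝ, ψ (τ, p) * (χ (p.1 - τ • e p.2, p.2) - χ p) =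
        ∫ τ : ℝ, φ τ *
          ((∫ p : E2 × ℝ, fderiv ℝ ψ (τ, p) (0, 0, 1) ∂σp) -
            ∫ p : E2 × ℝ, fderiv ℝ ψ (τ, p) (0, 0, 1) ∂σn) := by
  intro φ hφ hφc hφsupp
  classical
  have hψd : Differentiable ℝ ψ := hψ.differentiable one_ne_zero
  have hχm : Measurable χ := by rw [hχ]; exact measurable_one.indicator hE
  have hχb : ∀ q, ‖χ q‖ ≤ 1 := by
    intro q; rw [hχ]
    by_cases h : q ∈ E <;> simp [Set.indicator, h]
  -- derivative of slices in the p-direction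
  have hslice : ∀ (τ : ℝ) (p : E2 × ℝ), HasFDerivAt (fun q : E2 × ℝ => ψ (τ, q))
      ((fderiv ℝ ψ (τ, p)).comp (ContinuousLinearMap.inr ℝ ℝ (E2 × ℝ))) p := by
    intro τ p
    have h1 : HasFDerivAt (fun q : E2 × ℝ => ((τ : ℝ), q))
        (ContinuousLinearMap.inr ℝ ℝ (E2 × ℝ)) p :=
      (hasFDerivAt_const τ p).prodMk (hasFDerivAt_id p)
    exact (hψd (τ, p)).hasFDerivAt.comp p h1
  -- the τ-derivative
  set D : ℝ × E2 × ℝ → ℝ := fun z => fderiv ℝ ψ z (1, 0, 0) with hD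
  have hτd : ∀ (p : E2 × ℝ) (τ : ℝ), HasDerivAt (fun t => ψ (t, p)) (D (τ, p)) τ := by
    intro p τ
    have h1 : HasDerivAt (fun t : ℝ => (t, p)) ((1 : ℝ), (0 : E2 × ℝ)) τ :=
      (hasDerivAt_id τ).prodMk (hasDerivAt_const τ p)
    have h2 := (hψd (τ, p)).hasFDerivAt.comp_hasDerivAt τ h1
    exact h2
  -- constancy along free transport characteristics
  have hcurve : ∀ (y : E2) (s t : ℝ),
      HasDerivAt (fun t : ℝ => ψ (t, y + t • e s, s)) 0 t := by
    intro y s t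
    have hy : HasDerivAt (fun t : ℝ => y + t • e s) (e s) t := by
      have h := ((hasDerivAt_id t).smul_const (e s)).const_add y
      simpa using h
    have h1 : HasDerivAt (fun t : ℝ => ((t : ℝ), (y + t • e s, s)))
        ((1 : ℝ), (e s, (0 : ℝ))) t :=
      (hasDerivAt_id t).prodMk (hy.prodMk (hasDerivAt_const t s))
    have h2 := (hψd _).hasFDerivAt.comp_hasDerivAt t h1
    rwa [htrans t (y + t • e s) s] at h2
  have hconst : ∀ (y : E2) (s τ : ℝ), ψ (τ, y + τ • e s, s) = ψ (0, y, s) := by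
    intro y s τ
    have h := is_const_of_deriv_eq_zero (f := fun t : ℝ => ψ (t, y + t • e s, s))
      (fun t => (hcurve y s t).differentiableAt) (fun t => (hcurve y s t).deriv) τ 0
    simpa using h
  -- compact support of slices
  have hemb : ∀ τ : ℝ, Topology.IsClosedEmbedding (Prod.mk τ : (E2 × ℝ) → ℝ × E2 × ℝ) := by
    intro τ
    refine ⟨isEmbedding_prodMkRight τ, ?_⟩
    have : Set.range (Prod.mk τ : (E2 × ℝ) → ℝ × E2 × ℝ) = {τ} ×ˢ (univ : Set (E2 × ℝ)) := by
      ext z; simp [eq_comm, Prod.ext_iff]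
    rw [this]
    exact isClosed_singleton.prod isClosed_univ
  have hsl_cs : ∀ (F : ℝ × E2 × ℝ → ℝ), HasCompactSupport F →
      ∀ τ : ℝ, HasCompactSupport fun p : E2 × ℝ => F (τ, p) := by
    intro F hF τ
    exact hF.comp_isClosedEmbedding (hemb τ)
  -- support of slices
  have hsl_supp : ∀ τ : ℝ, tsupport (fun p : E2 × ℝ => ψ (τ, p)) ⊆ Ω ×ˢ (univ : Set ℝ) := by
    intro τ
    have hcl : IsClosed {p : E2 × ℝ | (τ, p) ∈ tsupport ψ} :=
      (isClosed_tsupport ψ).preimage (Continuous.prodMk_right τ)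
    have hsub : Function.support (fun p : E2 × ℝ => ψ (τ, p)) ⊆
        {p : E2 × ℝ | (τ, p) ∈ tsupport ψ} := by
      intro p hp
      exact subset_closure hp
    refine (closure_minimal hsub hcl).trans ?_
    intro p hp
    exact (hψsupp hp).2
  -- integrable helper on the product space
  have hprod_int : ∀ (F : ℝ × E2 × ℝ → ℝ), Continuous F → HasCompactSupport F →
      ∀ (b : E2 × ℝ → ℝ), Measurable b → (∀ q, ‖b q‖ ≤ 1) →
      Integrable (fun z : ℝ × E2 × ℝ => b z.2 * F z) := by
    intro F hFc hFcs b hb hbb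
    exact bdd_mul_integrable (hFc.integrable_of_hasCompactSupport hFcs)
      (hb.comp measurable_snd) (fun z => hbb z.2)
  have hDcont : Continuous D := (hψ.continuous_fderiv one_ne_zero).clm_apply continuous_const
  have hDcs : HasCompactSupport D := hψc.fderiv_apply ℝ ((1:ℝ), ((0:E2), (0:ℝ)))
  have hφ'cont : Continuous (deriv φ) := hφ.continuous_deriv le_rfl
  have hφ'int : Integrable (deriv φ) := hφ'cont.integrable_of_hasCompactSupport hφc.deriv
  have hφint : Integrable φ := hφ.continuous.integrable_of_hasCompactSupport hφc
  -- the two key integrable product functions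
  have hF1c : Continuous fun z : ℝ × E2 × ℝ => deriv φ z.1 * ψ z :=
    (hφ'cont.comp continuous_fst).mul hψ.continuous
  have hF1cs : HasCompactSupport fun z : ℝ × E2 × ℝ => deriv φ z.1 * ψ z := by
    have := hψc.mul_left (f := fun z : ℝ × E2 × ℝ => deriv φ z.1)
    exact this
  have hf1 : Integrable (fun z : ℝ × E2 × ℝ => χ z.2 * (deriv φ z.1 * ψ z)) :=
    hprod_int _ hF1c hF1cs χ hχm hχb
  have hF2c : Continuous fun z : ℝ × E2 × ℝ => φ z.1 * D z :=
    (hφ.continuous.comp continuous_fst).mul hDcont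
  have hF2cs : HasCompactSupport fun z : ℝ × E2 × ℝ => φ z.1 * D z := by
    have := hDcs.mul_left (f := fun z : ℝ × E2 × ℝ => φ z.1)
    exact this
  have hf2 : Integrable (fun z : ℝ × E2 × ℝ => χ z.2 * (φ z.1 * D z)) :=
    hprod_int _ hF2c hF2cs χ hχm hχb
  -- define G
  set G : ℝ → ℝ := fun t => ∫ p : E2 × ℝ, χ p * ψ (t, p) with hG
  -- Step I : the inner integral equals G 0 - G τ
  have hshear_int : ∀ τ : ℝ,
      (∫ p : E2 × ℝ, χ (p.1 - τ • e p.2, p.2) * ψ (τ, p)) = G 0 := by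
    intro τ
    have hme : MeasurableEmbedding (fun p : E2 × ℝ => (p.1 + τ • e p.2, p.2)) :=
      (shearEquiv τ).measurableEmbedding
    have h := (shear_mp τ).integral_comp hme
      (fun p : E2 × ℝ => χ (p.1 - τ • e p.2, p.2) * ψ (τ, p))
    rw [← h]
    rw [hG]
    congr 1
    funext q
    have h1 : q.1 + τ • e q.2 - τ • e q.2 = q.1 := by abel
    have h2 : ψ (τ, q.1 + τ • e q.2, q.2) = ψ (0, q.1, q.2) := hconst q.1 q.2 τ
    simp only [h1, h2]
  have hsliceint : ∀ τ : ℝ, Integrable fun p : E2 × ℝ => χ p * ψ (τ, p) := by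
    intro τ
    exact bdd_mul_integrable
      ((hψ.continuous.comp (Continuous.prodMk_right τ)).integrable_of_hasCompactSupport
        (hsl_cs ψ hψc τ)) hχm hχb
  have hshiftint : ∀ τ : ℝ, Integrable fun p : E2 × ℝ => χ (p.1 - τ • e p.2, p.2) * ψ (τ, p) := by
    intro τ
    refine bdd_mul_integrable
      ((hψ.continuous.comp (Continuous.prodMk_right τ)).integrable_of_hasCompactSupport
        (hsl_cs ψ hψc τ)) ?_ (fun p => hχb _)
    exact hχm.comp
      (((continuous_fst.sub ((cont_e.comp continuous_snd).const_smul τ)).prodMk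
        continuous_snd).measurable)
  have hA : ∀ τ : ℝ,
      (∫ p : E2 × ℝ, ψ (τ, p) * (χ (p.1 - τ • e p.2, p.2) - χ p)) = G 0 - G τ := by
    intro τ
    have h1 : (fun p : E2 × ℝ => ψ (τ, p) * (χ (p.1 - τ • e p.2, p.2) - χ p))
        = fun p => χ (p.1 - τ • e p.2, p.2) * ψ (τ, p) - χ p * ψ (τ, p) := by
      funext p; ring
    rw [h1, integral_sub (hshiftint τ) (hsliceint τ), hshear_int τ]
  simp only [hA]
  -- Step II : reduce to ∫ φ' G
  have hintderiv : (∫ τ : ℝ, deriv φ τ) = 0 := by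
    have h := integral_mul_deriv_eq_deriv_mul_of_integrable
      (u := fun _ : ℝ => (1 : ℝ)) (u' := fun _ : ℝ => (0 : ℝ))
      (v := φ) (v' := deriv φ)
      (fun x _ => hasDerivAt_const x 1)
      (fun x _ => (hφ.differentiable one_ne_zero x).hasDerivAt)
      (by simpa [Pi.mul_def] using hφ'int) (by simpa [Pi.mul_def] using (integrable_zero ℝ ℝ (volume : Measure ℝ))) (by simpa [Pi.mul_def] using hφint)
    simpa using h
  have hmargG : ∀ τ : ℝ, deriv φ τ * G τ = ∫ p : E2 × ℝ, χ p * (deriv φ τ * ψ (τ, p)) := by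
    intro τ
    rw [hG, ← integral_const_mul]
    congr 1; funext p; ring
  have hintG : Integrable fun τ : ℝ => deriv φ τ * G τ := by
    have h := hf1.integral_prod_left
    exact h.congr (Filter.Eventually.of_forall fun τ => (hmargG τ).symm)
  have hsplit : -∫ τ : ℝ, deriv φ τ * (G 0 - G τ) = ∫ τ : ℝ, deriv φ τ * G τ := by
    have h1 : (fun τ : ℝ => deriv φ τ * (G 0 - G τ))
        = fun τ => deriv φ τ * G 0 - deriv φ τ * G τ := by funext τ; ring
    rw [h1, integral_sub (hφ'int.mul_const _) hintG, integral_mul_const, hintderiv]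
    ring
  rw [hsplit]
  -- Step III : Fubini and integration by parts in τ
  have hswap1 : (∫ τ : ℝ, deriv φ τ * G τ)
      = ∫ p : E2 × ℝ, ∫ τ : ℝ, χ p * (deriv φ τ * ψ (τ, p)) := by
    simp only [hmargG]
    have h := integral_integral_swap
      (f := fun (τ : ℝ) (p : E2 × ℝ) => χ p * (deriv φ τ * ψ (τ, p)))
      (by rw [← Measure.volume_eq_prod]; exact hf1)
    exact h
  have hIBP : ∀ p : E2 × ℝ,
      (∫ τ : ℝ, χ p * (deriv φ τ * ψ (τ, p))) = -∫ τ : ℝ, χ p * (φ τ * D (τ, p)) := by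
    intro p
    have hDpc : Continuous fun t : ℝ => D (t, p) := hDcont.comp (Continuous.prodMk_left p)
    have hψpc : Continuous fun t : ℝ => ψ (t, p) := hψ.continuous.comp (Continuous.prodMk_left p)
    have h1 : Integrable fun t : ℝ => φ t * D (t, p) :=
      ((hφ.continuous.mul hDpc).integrable_of_hasCompactSupport
        (hφc.mul_right))
    have h2 : Integrable fun t : ℝ => deriv φ t * ψ (t, p) :=
      ((hφ'cont.mul hψpc).integrable_of_hasCompactSupport (hφc.deriv.mul_right))
    have h3 : Integrable fun t : ℝ => φ t * ψ (t, p) :=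
      ((hφ.continuous.mul hψpc).integrable_of_hasCompactSupport (hφc.mul_right))
    have h := integral_mul_deriv_eq_deriv_mul_of_integrable
      (u := φ) (u' := deriv φ) (v := fun t => ψ (t, p)) (v' := fun t => D (t, p))
      (fun x _ => (hφ.differentiable one_ne_zero x).hasDerivAt)
      (fun x _ => hτd p x) h1 h2 h3
    rw [integral_const_mul, integral_const_mul, h]
    ring
  have hswap2 : (∫ p : E2 × ℝ, ∫ τ : ℝ, χ p * (φ τ * D (τ, p)))
      = ∫ τ : ℝ, ∫ p : E2 × ℝ, χ p * (φ τ * D (τ, p)) := by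
    have h := integral_integral_swap
      (f := fun (τ : ℝ) (p : E2 × ℝ) => χ p * (φ τ * D (τ, p)))
      (by rw [← Measure.volume_eq_prod]; exact hf2)
    exact h.symm
  rw [hswap1]
  have : (∫ p : E2 × ℝ, ∫ τ : ℝ, χ p * (deriv φ τ * ψ (τ, p)))
      = -∫ p : E2 × ℝ, ∫ τ : ℝ, χ p * (φ τ * D (τ, p)) := by
    rw [← integral_neg]
    congr 1; funext p
    rw [hIBP p]
  rw [this, hswap2, ← integral_neg]
  -- Step IV : apply the kinetic equation to the slices
  congr 1; funext τ
  have hcd : ContDiff ℝ 1 fun q : E2 × ℝ => ψ (τ, q) :=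
    hψ.comp (contDiff_const.prodMk contDiff_id)
  have hkτ := hkin (fun q : E2 × ℝ => ψ (τ, q)) hcd (hsl_cs ψ hψc τ) (hsl_supp τ)
  have hfd : ∀ p : E2 × ℝ, fderiv ℝ (fun q : E2 × ℝ => ψ (τ, q)) p
      = (fderiv ℝ ψ (τ, p)).comp (ContinuousLinearMap.inr ℝ ℝ (E2 × ℝ)) :=
    fun p => (hslice τ p).fderiv
  have htr : ∀ p : E2 × ℝ,
      fderiv ℝ ψ (τ, p) ((0 : ℝ), e p.2, (0 : ℝ)) = -D (τ, p) := by
    intro p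
    have h0 := htrans τ p.1 p.2
    have heq : ((1 : ℝ), e p.2, (0 : ℝ))
        = ((1 : ℝ), (0 : E2), (0 : ℝ)) + ((0 : ℝ), e p.2, (0 : ℝ)) := by
      simp [Prod.ext_iff]
    rw [heq, map_add] at h0
    have : (τ, p.1, p.2) = (τ, p) := by simp
    rw [this] at h0
    simp only [hD]
    linarith
  have hL : (∫ p : E2 × ℝ, χ p * fderiv ℝ (fun q : E2 × ℝ => ψ (τ, q)) p (e p.2, 0))
      = ∫ p : E2 × ℝ, χ p * (-D (τ, p)) := by
    congr 1; funext p
    rw [hfd p]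
    simp only [ContinuousLinearMap.comp_apply, ContinuousLinearMap.inr_apply]
    rw [htr p]
  have hR1 : (∫ p : E2 × ℝ, fderiv ℝ (fun q : E2 × ℝ => ψ (τ, q)) p (0, 1) ∂σp)
      = ∫ p : E2 × ℝ, fderiv ℝ ψ (τ, p) (0, 0, 1) ∂σp := by
    congr 1; funext p
    rw [hfd p]
    simp [ContinuousLinearMap.comp_apply, ContinuousLinearMap.inr_apply]
  have hR2 : (∫ p : E2 × ℝ, fderiv ℝ (fun q : E2 × ℝ => ψ (τ, q)) p (0, 1) ∂σn)
      = ∫ p : E2 × ℝ, fderiv ℝ ψ (τ, p) (0, 0, 1) ∂σn := by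
    congr 1; funext p
    rw [hfd p]
    simp [ContinuousLinearMap.comp_apply, ContinuousLinearMap.inr_apply]
  rw [hL, hR1, hR2] at hkτ
  calc -∫ p : E2 × ℝ, χ p * (φ τ * D (τ, p))
      = φ τ * ∫ p : E2 × ℝ, χ p * (-D (τ, p)) := by
        rw [← integral_const_mul, ← integral_neg]
        congr 1; funext p; ring
    _ = φ τ * ((∫ p : E2 × ℝ, fderiv ℝ ψ (τ, p) (0, 0, 1) ∂σp) -
          ∫ p : E2 × ℝ, fderiv ℝ ψ (τ, p) (0, 0, 1) ∂σn) := by rw [hkτ]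
end
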